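/- arXiv:1611.04762 — 5 statements merged into one kernel-verified Lean document; each statement's English description precedes it below -/
import Mathlib

section
/- Let a, g, b, c, h, R, q_r > 0 and 0 < 2q_p < q_r. Define I₁(a,g) = e^{-a²g²/4}, γ₁ = 1 + I₁(2a,g) - 2I₁(a,g)², γ₂ = I₁(3a,g) + I₁(a,g) - 2I₁(2a,g)I₁(a,g), and V_c^l(q) = -(1/(2I₁(a,g)²))·( bR²(q_r + 2q)γ₁(1 + I₁(2a,g)) + hRγ₁ - 2bR²q γ₂ I₁(a,g) ). Then V_c^l(q_p) < -hRγ₁/(2I₁(a,g)²) < 0 and V_c^l(-q_p) < -hRγ₁/(2I₁(a,g)²) < 0. -/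
theorem Vcl_neg (a g b c h R qr qp : ℝ)
    (ha : 0 < a) (hg : 0 < g) (hb : 0 < b) (hc : 0 < c) (hh : 0 < h)
    (hR : 0 < R) (hqr : 0 < qr) (hqp : 0 < qp) (hqpr : 2 * qp < qr)
    (I1 : ℝ → ℝ) (hI1 : ∀ s : ℝ, I1 s = Real.exp (-(s ^ 2 * g ^ 2) / 4))
    (γ1 γ2 : ℝ)
    (hγ1 : γ1 = 1 + I1 (2 * a) - 2 * I1 a ^ 2)
    (hγ2 : γ2 = I1 (3 * a) + I1 a - 2 * I1 (2 * a) * I1 a)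
    (Vcl : ℝ → ℝ)
    (hVcl : ∀ q : ℝ, Vcl q = -(1 / (2 * I1 a ^ 2)) *
      (b * R ^ 2 * (qr + 2 * q) * γ1 * (1 + I1 (2 * a)) + h * R * γ1
        - 2 * b * R ^ 2 * q * γ2 * I1 a)) :
    (Vcl qp < -(h * R * γ1) / (2 * I1 a ^ 2) ∧ -(h * R * γ1) / (2 * I1 a ^ 2) < 0) ∧
      (Vcl (-qp) < -(h * R * γ1) / (2 * I1 a ^ 2) ∧ -(h * R * γ1) / (2 * I1 a ^ 2) < 0) := by
  set x := I1 a with hx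
  have hxpos : 0 < x := by rw [hx, hI1]; exact Real.exp_pos _
  have hxlt : x < 1 := by
    rw [hx, hI1]
    apply Real.exp_lt_one_iff.mpr
    have : 0 < a ^ 2 * g ^ 2 := by positivity
    linarith
  have h2a : I1 (2 * a) = x ^ 4 := by
    rw [hx, hI1, hI1, ← Real.exp_nat_mul]
    congr 1; push_cast; ring
  have h3a : I1 (3 * a) = x ^ 9 := by
    rw [hx, hI1, hI1, ← Real.exp_nat_mul]
    congr 1; push_cast; ring
  have hg1 : γ1 = (1 - x ^ 2) ^ 2 := by rw [hγ1, h2a]; ring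
  have hg2 : γ2 = x * (1 - x ^ 4) ^ 2 := by rw [hγ2, h2a, h3a]; ring
  have hx2lt : x ^ 2 < 1 := by nlinarith
  have hg1pos : 0 < γ1 := by
    rw [hg1]
    have : 1 - x ^ 2 > 0 := by linarith
    positivity
  have hg2pos : 0 < γ2 := by
    rw [hg2]
    have : x ^ 4 < 1 := by nlinarith
    have : 1 - x ^ 4 > 0 := by linarith
    positivity
  have hden : 0 < 2 * x ^ 2 := by positivity
  have hneg : -(h * R * γ1) / (2 * x ^ 2) < 0 := by
    apply div_neg_of_neg_of_pos _ hden
    nlinarith [mul_pos (mul_pos hh hR) hg1pos]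
  -- key inequality: γ2 * x < 2 * γ1 * (1 + x^4)
  have hkey : γ2 * x < 2 * γ1 * (1 + x ^ 4) := by
    rw [hg1, hg2]
    nlinarith [sq_nonneg (1 - x ^ 2), sq_nonneg (x * (1 - x ^ 2)),
      sq_nonneg (x ^ 2 * (1 - x ^ 2)), sq_nonneg (x ^ 3 * (1 - x ^ 2)),
      mul_pos hxpos hxpos]
  have key : ∀ q : ℝ, h * R * γ1 <
      b * R ^ 2 * (qr + 2 * q) * γ1 * (1 + I1 (2 * a)) + h * R * γ1
        - 2 * b * R ^ 2 * q * γ2 * x → Vcl q < -(h * R * γ1) / (2 * x ^ 2) := by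
    intro q hq
    rw [hVcl q]
    have hE : -(1 / (2 * x ^ 2)) *
        (b * R ^ 2 * (qr + 2 * q) * γ1 * (1 + I1 (2 * a)) + h * R * γ1
          - 2 * b * R ^ 2 * q * γ2 * x) =
        -((b * R ^ 2 * (qr + 2 * q) * γ1 * (1 + I1 (2 * a)) + h * R * γ1
          - 2 * b * R ^ 2 * q * γ2 * x) / (2 * x ^ 2)) := by ring
    rw [hE, neg_div]
    exact neg_lt_neg (by exact (div_lt_div_iff_of_pos_right hden).mpr hq)
  have hbR : 0 < b * R ^ 2 := by positivity
  constructor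
  · refine ⟨key qp ?_, hneg⟩
    rw [h2a]
    have hpos : 0 < γ1 * (1 + x ^ 4) := by positivity
    have e1 : b * R ^ 2 * (4 * qp * (γ1 * (1 + x ^ 4))) <
        b * R ^ 2 * ((qr + 2 * qp) * (γ1 * (1 + x ^ 4))) := by
      apply mul_lt_mul_of_pos_left _ hbR
      apply mul_lt_mul_of_pos_right _ hpos
      linarith
    have e2 : b * R ^ 2 * (2 * qp * (γ2 * x)) <
        b * R ^ 2 * (2 * qp * (2 * γ1 * (1 + x ^ 4))) := by
      apply mul_lt_mul_of_pos_left _ hbR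
      apply mul_lt_mul_of_pos_left hkey (by linarith)
    linarith [e1, e2]
  · refine ⟨key (-qp) ?_, hneg⟩
    rw [h2a]
    have h1 : 0 < b * R ^ 2 * (qr - 2 * qp) * γ1 * (1 + x ^ 4) := by
      have : 0 < qr - 2 * qp := by linarith
      have : 0 < 1 + x ^ 4 := by positivity
      positivity
    have h2 : 0 < 2 * b * R ^ 2 * qp * γ2 * x := by positivity
    nlinarith
end

section
/- Let a, g, b, c, R, q_r > 0 and define I₁(a,g) = e^{-a²g²/4}, I₂(a,g) = (1/2)(e^{-(a-1)²g²/4} - e^{-(a+1)²g²/4}), γ₁ = 1 + I₁(2a,g) - 2I₁(a,g)², γ₄ = γ₁(1 - I₁(2a,g)), γ₆ = (1 - I₁(2a,g))(I₁(a,g)² - I₁(2a,g)), and V̄_c^u = b²q_rR γ₄ / (2c I₁(a,g) I₂(a,g)). If V_c > V̄_c^u, then c V_c I₁(a,g) I₂(a,g) + b² q_r R γ₆ > (1/2) b² q_r R (1 - I₁(2a,g))² > 0. -/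
theorem rho2_numerator_pos (a g b c R qr Vc : ℝ)
    (ha : 0 < a) (hg : 0 < g) (hb : 0 < b) (hc : 0 < c) (hR : 0 < R) (hqr : 0 < qr)
    (I1 I2 : ℝ → ℝ)
    (hI1 : ∀ s : ℝ, I1 s = Real.exp (-(s ^ 2 * g ^ 2) / 4))
    (hI2 : ∀ s : ℝ, I2 s = (1 / 2) * (Real.exp (-((s - 1) ^ 2 * g ^ 2) / 4)
      - Real.exp (-((s + 1) ^ 2 * g ^ 2) / 4)))
    (γ1 γ4 γ6 Vcu : ℝ)
    (hγ1 : γ1 = 1 + I1 (2 * a) - 2 * I1 a ^ 2)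
    (hγ4 : γ4 = γ1 * (1 - I1 (2 * a)))
    (hγ6 : γ6 = (1 - I1 (2 * a)) * (I1 a ^ 2 - I1 (2 * a)))
    (hVcu : Vcu = b ^ 2 * qr * R * γ4 / (2 * c * I1 a * I2 a))
    (hVc : Vc > Vcu) :
    c * Vc * I1 a * I2 a + b ^ 2 * qr * R * γ6 >
        (1 / 2) * b ^ 2 * qr * R * (1 - I1 (2 * a)) ^ 2 ∧
      (1 / 2) * b ^ 2 * qr * R * (1 - I1 (2 * a)) ^ 2 > 0 := by
  have hI1a : 0 < I1 a := by rw [hI1]; exact Real.exp_pos _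
  have hI2a : 0 < I2 a := by
    rw [hI2]
    have : Real.exp (-((a + 1) ^ 2 * g ^ 2) / 4) < Real.exp (-((a - 1) ^ 2 * g ^ 2) / 4) := by
      apply Real.exp_lt_exp.2
      have : (a - 1) ^ 2 < (a + 1) ^ 2 := by nlinarith
      nlinarith [sq_nonneg g, hg.le, mul_pos (mul_pos ha hg) hg]
    linarith
  have hI12a : I1 (2 * a) < 1 := by
    rw [hI1]
    have h : 0 < (2*a) ^ 2 * g ^ 2 / 4 := by positivity
    have : -((2*a) ^ 2 * g ^ 2) / 4 < 0 := by linarith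
    calc Real.exp _ < Real.exp 0 := Real.exp_lt_exp.2 this
      _ = 1 := Real.exp_zero
  have hpos : 0 < 2 * c * I1 a * I2 a := by positivity
  have key : c * Vc * I1 a * I2 a > b ^ 2 * qr * R * γ4 / 2 := by
    have := (div_lt_iff₀ hpos).1 (hVcu ▸ hVc : b ^ 2 * qr * R * γ4 / (2 * c * I1 a * I2 a) < Vc)
    linarith
  have hid : γ4 + 2 * γ6 = (1 - I1 (2 * a)) ^ 2 := by
    rw [hγ4, hγ6, hγ1]; ring
  have h1 : 0 < 1 - I1 (2 * a) := by linarith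
  constructor
  · rw [← hid]; nlinarith [key]
  · exact mul_pos (by positivity) (pow_pos h1 2)
end

section
/- Let a, g, b, c, R, q_r > 0 and define I₁, I₂, γ₄ as before, V̄_c^u = b²q_rRγ₄/(2c I₁(a,g)I₂(a,g)), γ₇ = b(I₁(2a,g) - 1)/(2c I₂(a,g)), γ₈ = 2cV_c I₁(a,g)I₂(a,g) - b²q_rRγ₄, and ρ₂ = sqrt( (cV_c I₁(a,g)I₂(a,g) + b²q_rRγ₆) / (2c²I₂(a,g)²q_rR) ). If V_c > V̄_c^u, then ρ₂² - γ₇² = γ₈ / (4c²I₂(a,g)²q_rR) > 0; in particular |γ₇/ρ₂| < 1, so α = arccos(γ₇/ρ₂) is well-defined. -/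
set_option maxHeartbeats 1000000

theorem rho2_gamma7_alpha (a g b c R qr Vc : ℝ)
    (ha : 0 < a) (hg : 0 < g) (hb : 0 < b) (hc : 0 < c) (hR : 0 < R) (hqr : 0 < qr)
    (I1 I2 : ℝ → ℝ)
    (hI1 : ∀ s : ℝ, I1 s = Real.exp (-(s ^ 2 * g ^ 2) / 4))
    (hI2 : ∀ s : ℝ, I2 s = (1 / 2) * (Real.exp (-((s - 1) ^ 2 * g ^ 2) / 4)
      - Real.exp (-((s + 1) ^ 2 * g ^ 2) / 4)))
    (γ1 γ4 γ6 γ7 γ8 Vcu ρ2 : ℝ)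
    (hγ1 : γ1 = 1 + I1 (2 * a) - 2 * I1 a ^ 2)
    (hγ4 : γ4 = γ1 * (1 - I1 (2 * a)))
    (hγ6 : γ6 = (1 - I1 (2 * a)) * (I1 a ^ 2 - I1 (2 * a)))
    (hγ7 : γ7 = b * (I1 (2 * a) - 1) / (2 * c * I2 a))
    (hγ8 : γ8 = 2 * c * Vc * I1 a * I2 a - b ^ 2 * qr * R * γ4)
    (hVcu : Vcu = b ^ 2 * qr * R * γ4 / (2 * c * I1 a * I2 a))
    (hρ2 : ρ2 = Real.sqrt ((c * Vc * I1 a * I2 a + b ^ 2 * qr * R * γ6) /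
      (2 * c ^ 2 * I2 a ^ 2 * qr * R)))
    (hVc : Vc > Vcu) :
    ρ2 ^ 2 - γ7 ^ 2 = γ8 / (4 * c ^ 2 * I2 a ^ 2 * qr * R) ∧
      0 < γ8 / (4 * c ^ 2 * I2 a ^ 2 * qr * R) ∧
      |γ7 / ρ2| < 1 := by
  -- basic facts
  have hE : I1 (2 * a) = I1 a ^ 4 := by
    rw [hI1 a, hI1 (2 * a),
      show (Real.exp (-(a ^ 2 * g ^ 2) / 4)) ^ 4
        = Real.exp (-(a ^ 2 * g ^ 2) / 4 + -(a ^ 2 * g ^ 2) / 4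
            + -(a ^ 2 * g ^ 2) / 4 + -(a ^ 2 * g ^ 2) / 4) from by
        rw [Real.exp_add, Real.exp_add, Real.exp_add]; ring]
    congr 1
    ring
  have hI1pos : 0 < I1 a := by rw [hI1 a]; exact Real.exp_pos _
  have hI1lt : I1 a < 1 := by
    rw [hI1 a, Real.exp_lt_one_iff]
    nlinarith [pow_pos ha 2, pow_pos hg 2]
  have hI2pos : 0 < I2 a := by
    rw [hI2 a]
    have h : -((a + 1) ^ 2 * g ^ 2) / 4 < -((a - 1) ^ 2 * g ^ 2) / 4 := by
      nlinarith [pow_pos hg 2]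
    have := Real.exp_lt_exp.mpr h
    linarith
  have hx2 : I1 a ^ 2 < 1 := by nlinarith
  have hγ1pos : 0 < γ1 := by
    rw [hγ1, hE]
    nlinarith [pow_pos (show (0:ℝ) < 1 - I1 a ^ 2 by linarith) 2]
  have hzlt : I1 (2 * a) < 1 := by
    rw [hE]; nlinarith [pow_pos hI1pos 2]
  have hγ4pos : 0 < γ4 := by
    rw [hγ4]
    exact mul_pos hγ1pos (by linarith)
  have hγ6nonneg : 0 ≤ γ6 := by
    rw [hγ6, hE]
    have h1 : (0:ℝ) ≤ 1 - I1 a ^ 4 := by nlinarith [pow_pos hI1pos 2]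
    have h2 : (0:ℝ) ≤ I1 a ^ 2 - I1 a ^ 4 := by nlinarith [pow_pos hI1pos 2]
    exact mul_nonneg h1 h2
  have hVcupos : 0 < Vcu := by
    rw [hVcu]; positivity
  have hVcpos : 0 < Vc := lt_trans hVcupos hVc
  have hγ8' : γ8 = 2 * c * I1 a * I2 a * (Vc - Vcu) := by
    rw [hγ8, hVcu]
    field_simp
  have hγ8pos : 0 < γ8 := by
    rw [hγ8']
    have : 0 < Vc - Vcu := by linarith
    positivity
  have hquotpos : 0 < γ8 / (4 * c ^ 2 * I2 a ^ 2 * qr * R) := by positivity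
  have harg : (0:ℝ) ≤ (c * Vc * I1 a * I2 a + b ^ 2 * qr * R * γ6) /
      (2 * c ^ 2 * I2 a ^ 2 * qr * R) := by
    have h1 : 0 < c * Vc * I1 a * I2 a := by positivity
    have h2 : 0 ≤ b ^ 2 * qr * R * γ6 := by positivity
    have h3 : 0 < 2 * c ^ 2 * I2 a ^ 2 * qr * R := by positivity
    positivity
  have hρ2sq : ρ2 ^ 2 = (c * Vc * I1 a * I2 a + b ^ 2 * qr * R * γ6) /
      (2 * c ^ 2 * I2 a ^ 2 * qr * R) := by
    rw [hρ2, Real.sq_sqrt harg]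
  have hI2ne : I2 a ≠ 0 := ne_of_gt hI2pos
  have hcne : c ≠ 0 := ne_of_gt hc
  have hqrne : qr ≠ 0 := ne_of_gt hqr
  have hRne : R ≠ 0 := ne_of_gt hR
  have hmain : ρ2 ^ 2 - γ7 ^ 2 = γ8 / (4 * c ^ 2 * I2 a ^ 2 * qr * R) := by
    rw [hρ2sq, hγ7, hγ8, hγ4, hγ1, hγ6]
    generalize I1 (2 * a) = z
    generalize I1 a = x
    generalize hy : I2 a = y at hI2ne ⊢
    field_simp
    ring
  refine ⟨hmain, hquotpos, ?_⟩
  have hρ2nonneg : 0 ≤ ρ2 := by rw [hρ2]; exact Real.sqrt_nonneg _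
  have h2 : γ7 ^ 2 < ρ2 ^ 2 := by nlinarith [sq_nonneg γ7]
  have hρ2pos : 0 < ρ2 := by nlinarith [sq_nonneg γ7]
  rw [abs_div, abs_of_pos hρ2pos, div_lt_one hρ2pos]
  nlinarith [abs_nonneg γ7, sq_abs γ7]
end

section
/- Let m₁₁, m₁₃, m₂₂, m₃₁, h be real numbers, and let A be the 3×3 matrix with rows (m₁₁, 0, -m₁₃), (0, m₂₂, 0), (-m₃₁, 0, -h). Then the characteristic polynomial of A is (λ - m₂₂)(λ² + (h - m₁₁)λ - m₁₁h - m₁₃m₃₁). Consequently, if m₂₂ < 0, m₁₁ < h, and m₁₁h + m₁₃m₃₁ < 0, then every eigenvalue of A has strictly negative real part. -/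
open Polynomial

theorem jacobian_eq1_hurwitz (m11 m13 m22 m31 h : ℝ)
    (A : Matrix (Fin 3) (Fin 3) ℝ)
    (hA : A = Matrix.of ![![m11, 0, -m13], ![0, m22, 0], ![-m31, 0, -h]]) :
    A.charpoly = (X - C m22) * (X ^ 2 + C (h - m11) * X + C (-(m11 * h) - m13 * m31)) ∧
      (m22 < 0 → m11 < h → m11 * h + m13 * m31 < 0 →
        ∀ z : ℂ, (A.charpoly.map (algebraMap ℝ ℂ)).IsRoot z → z.re < 0) := by
  have hcp : A.charpoly =
      (X - C m22) * (X ^ 2 + C (h - m11) * X + C (-(m11 * h) - m13 * m31)) := by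
    subst hA
    rw [Matrix.charpoly, Matrix.det_fin_three]
    simp [Matrix.charmatrix_apply, Matrix.one_apply]
    ring
  refine ⟨hcp, ?_⟩
  intro h22 h1 h2 z hz
  rw [hcp, IsRoot, Polynomial.map_mul, Polynomial.eval_mul, mul_eq_zero] at hz
  rcases hz with hz | hz
  · simp only [Polynomial.map_sub, map_X, map_C, eval_sub, eval_X, eval_C, sub_eq_zero] at hz
    subst hz
    simpa using h22
  · simp only [Polynomial.map_add, Polynomial.map_pow, Polynomial.map_mul, map_X, map_C,
      eval_add, eval_pow, eval_mul, eval_X, eval_C] at hz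
    set b : ℝ := h - m11 with hb
    set c : ℝ := -(m11 * h) - m13 * m31 with hc
    have hbpos : 0 < b := by simp [hb]; linarith
    have hcpos : 0 < c := by simp [hc]; linarith
    obtain ⟨x, y, rfl⟩ : ∃ a b : ℝ, z = Complex.mk a b := ⟨z.re, z.im, rfl⟩
    have hre : x ^ 2 - y ^ 2 + b * x + c = 0 := by
      have := congrArg Complex.re hz
      simp only [Complex.coe_algebraMap, pow_two, Complex.add_re, Complex.mul_re,
        Complex.mul_im, Complex.ofReal_re, Complex.ofReal_im, Complex.zero_re] at this
      linarith
    have him : 2 * x * y + b * y = 0 := by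
      have := congrArg Complex.im hz
      simp only [Complex.coe_algebraMap, pow_two, Complex.add_im, Complex.mul_im,
        Complex.mul_re, Complex.ofReal_re, Complex.ofReal_im, Complex.zero_im] at this
      linarith
    show x < 0
    by_cases hy : y = 0
    · subst hy
      by_contra hx
      push_neg at hx
      nlinarith
    · have : y * (2 * x + b) = 0 := by linarith
      have h2x : 2 * x + b = 0 := by
        rcases mul_eq_zero.mp this with h | h
        · exact absurd h hy
        · exact h
      linarith
end

section
/- For all g > 0: if 0 < a < 1 then γ₃ > 0, and if 1 < a then γ₃ < 0, where γ₃ = (I₁(3a,g) - I₁(a,g)) I₂(a,g) + (1 - I₁(2a,g)) I₂(2a,g), with I₁(a,g) = e^{-a²g²/4} and I₂(a,g) = (1/2)(e^{-(a-1)²g²/4} - e^{-(a+1)²g²/4}). -/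
set_option maxHeartbeats 1000000


theorem gamma3_sign (a g : ℝ) (hg : 0 < g)
    (I1 I2 : ℝ → ℝ)
    (hI1 : ∀ s : ℝ, I1 s = Real.exp (-(s ^ 2 * g ^ 2) / 4))
    (hI2 : ∀ s : ℝ, I2 s = (1 / 2) * (Real.exp (-((s - 1) ^ 2 * g ^ 2) / 4)
      - Real.exp (-((s + 1) ^ 2 * g ^ 2) / 4)))
    (γ3 : ℝ)
    (hγ3 : γ3 = (I1 (3 * a) - I1 a) * I2 a + (1 - I1 (2 * a)) * I2 (2 * a)) :
    (0 < a → a < 1 → 0 < γ3) ∧ (1 < a → γ3 < 0) := by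
  set x : ℝ := -(a ^ 2 * g ^ 2) / 4 with hx
  set w : ℝ := (a * g ^ 2) / 4 with hw
  set z : ℝ := -(g ^ 2) / 4 with hz
  set X : ℝ := Real.exp x with hX
  set W : ℝ := Real.exp w with hWdef
  set Z : ℝ := Real.exp z with hZdef
  have hWne : W ≠ 0 := (Real.exp_pos w).ne'
  have h3a : Real.exp (-((3 * a) ^ 2 * g ^ 2) / 4) = X ^ 9 := by
    rw [hX, ← Real.exp_nat_mul]; congr 1; push_cast; rw [hx]; ring
  have h2a : Real.exp (-((2 * a) ^ 2 * g ^ 2) / 4) = X ^ 4 := by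
    rw [hX, ← Real.exp_nat_mul]; congr 1; push_cast; rw [hx]; ring
  have ham : Real.exp (-((a - 1) ^ 2 * g ^ 2) / 4) = X * W ^ 2 * Z := by
    rw [hX, hWdef, hZdef, ← Real.exp_nat_mul, ← Real.exp_add, ← Real.exp_add]
    congr 1; push_cast; rw [hx, hw, hz]; ring
  have hap : Real.exp (-((a + 1) ^ 2 * g ^ 2) / 4) = X * W⁻¹ ^ 2 * Z := by
    rw [hX, hWdef, hZdef, ← Real.exp_neg, ← Real.exp_nat_mul, ← Real.exp_add,
      ← Real.exp_add]
    congr 1; push_cast; rw [hx, hw, hz]; ring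
  have h2am : Real.exp (-((2 * a - 1) ^ 2 * g ^ 2) / 4) = X ^ 4 * W ^ 4 * Z := by
    rw [hX, hWdef, hZdef, ← Real.exp_nat_mul, ← Real.exp_nat_mul, ← Real.exp_add,
      ← Real.exp_add]
    congr 1; push_cast; rw [hx, hw, hz]; ring
  have h2ap : Real.exp (-((2 * a + 1) ^ 2 * g ^ 2) / 4) = X ^ 4 * W⁻¹ ^ 4 * Z := by
    rw [hX, hWdef, hZdef, ← Real.exp_neg, ← Real.exp_nat_mul, ← Real.exp_nat_mul,
      ← Real.exp_add, ← Real.exp_add]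
    congr 1; push_cast; rw [hx, hw, hz]; ring
  have hIa : Real.exp (-(a ^ 2 * g ^ 2) / 4) = X := by rw [hX, hx]
  have key : γ3 = ((1 / 2) * Z * X ^ 2 * (1 - X ^ 4) * (W ^ 2 - W⁻¹ ^ 2) *
      (1 - X ^ 2 * W⁻¹ ^ 2)) * (X ^ 2 * W ^ 2 - 1) := by
    rw [hγ3, hI1, hI1, hI1, hI2, hI2, h3a, h2a, ham, hap, h2am, h2ap, hIa]
    field_simp
    ring
  have hXpos : 0 < X := Real.exp_pos x
  have hWpos : 0 < W := Real.exp_pos w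
  have hZpos : 0 < Z := Real.exp_pos z
  have hXW : X ^ 2 * W ^ 2 = Real.exp (2 * x + 2 * w) := by
    rw [hX, hWdef, Real.exp_add, ← Real.exp_nat_mul, ← Real.exp_nat_mul]
    push_cast; ring
  have hg2 : 0 < g ^ 2 := by positivity
  -- common facts assuming 0 < a
  have main : ∀ _ : 0 < a,
      0 < (1 / 2) * Z * X ^ 2 * (1 - X ^ 4) * (W ^ 2 - W⁻¹ ^ 2) *
        (1 - X ^ 2 * W⁻¹ ^ 2) := by
    intro ha
    have hxneg : x < 0 := by
      have : 0 < a ^ 2 * g ^ 2 := by positivity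
      rw [hx]; linarith
    have hwpos : 0 < w := by rw [hw]; positivity
    have hX1 : X < 1 := Real.exp_lt_one_iff.mpr hxneg
    have hW1 : 1 < W := Real.one_lt_exp_iff.mpr hwpos
    have hWinv : W⁻¹ < 1 := inv_lt_one_of_one_lt₀ hW1
    have hWinvpos : 0 < W⁻¹ := by positivity
    have h1 : 0 < 1 - X ^ 4 := by
      have := pow_lt_one₀ hXpos.le hX1 (by norm_num : (4:ℕ) ≠ 0)
      linarith
    have h2 : 0 < W ^ 2 - W⁻¹ ^ 2 := by nlinarith [mul_pos hWinvpos hWinvpos]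
    have h3 : 0 < 1 - X ^ 2 * W⁻¹ ^ 2 := by
      have hm : X * W⁻¹ < 1 := by
        have := mul_lt_mul_of_pos_right hX1 hWinvpos
        linarith
      have hmp : 0 < X * W⁻¹ := mul_pos hXpos hWinvpos
      nlinarith
    positivity
  constructor
  · intro ha ha1
    have hpos := main ha
    have hsign : 1 < X ^ 2 * W ^ 2 := by
      rw [hXW]
      apply Real.one_lt_exp_iff.mpr
      rw [hx, hw]
      nlinarith [mul_pos (mul_pos ha (sub_pos.mpr ha1)) hg2]
    rw [key]
    exact mul_pos hpos (by linarith)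
  · intro ha1
    have ha : 0 < a := by linarith
    have hpos := main ha
    have hsign : X ^ 2 * W ^ 2 < 1 := by
      rw [hXW]
      apply Real.exp_lt_one_iff.mpr
      rw [hx, hw]
      nlinarith [mul_pos (mul_pos ha (sub_pos.mpr ha1)) hg2]
    rw [key]
    exact mul_neg_of_pos_of_neg hpos (by linarith)
end
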